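/- arXiv:2111.08852 — 3 statements merged into one kernel-verified Lean document; each statement's English description precedes it below -/
import Mathlib

section
/- Under the hypotheses of the FRB descent theorem (0 < λ < min{1/(4L), λ_f}, inf(f+g) > −∞), the sequence (H(z_k)) is nonincreasing and convergent, and ∑_{k=0}^∞ ‖z_k − z_{k−1}‖² < ∞; in particular ‖z_k − z_{k−1}‖ → 0 as k → ∞. -/
open Filter Topology

variable {H : Type*} [NormedAddCommGroup H] [InnerProductSpace ℝ H]

/-- `v` is a Fréchet subgradient of `f` at `x`. -/
def FSubd (f : H → EReal) (x v : H) : Prop :=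
  f x ≠ ⊤ ∧ ∀ ε : ℝ, 0 < ε → ∃ δ : ℝ, 0 < δ ∧ ∀ y : H, ‖y - x‖ < δ →
    f x + (((inner ℝ v (y - x) : ℝ) - ε * ‖y - x‖ : ℝ) : EReal) ≤ f y

/-- `v` is a limiting (Mordukhovich) subgradient of `f` at `x`. -/
def LSubd (f : H → EReal) (x v : H) : Prop :=
  ∃ xs vs : ℕ → H,
    Tendsto xs atTop (nhds x) ∧
    Tendsto (fun k => f (xs k)) atTop (nhds (f x)) ∧
    (∀ k, FSubd f (xs k) (vs k)) ∧
    Tendsto vs atTop (nhds v)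

/-- `f` is proper: never `⊥` and finite somewhere. -/
def ProperFn (f : H → EReal) : Prop :=
  (∀ x, f x ≠ ⊥) ∧ ∃ x, f x ≠ ⊤

/-- The proximal mapping: set of minimizers of `u ↦ f u + (1/(2λ))‖x - u‖²`. -/
def Prox (lam : ℝ) (f : H → EReal) (x : H) : Set H :=
  {y | ∀ u : H, f y + ((1 / (2 * lam) * ‖x - y‖ ^ 2 : ℝ) : EReal)
      ≤ f u + ((1 / (2 * lam) * ‖x - u‖ ^ 2 : ℝ) : EReal)}

/-- `f` is prox-bounded with threshold (at least) `lf`. -/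
def ProxBddWith (f : H → EReal) (lf : ℝ) : Prop :=
  ∀ lam : ℝ, 0 < lam → lam < lf →
    ∃ b : ℝ, ∀ y : H, (b : EReal) ≤ f y + ((1 / (2 * lam) * ‖y‖ ^ 2 : ℝ) : EReal)

/-! The prox inequality defining `x (k + 1)`, tested against `x k`, together with the descent
lemma for `g` and the Lipschitz/AM–GM bound
`⟪∇g (x (k - 1)) - ∇g (x k), x (k + 1) - x k⟫ ≤ L/2 (‖x (k + 1) - x k‖² + ‖x k - x (k - 1)‖²)`,
gives `H (z k) + (1/(4λ) - L) ‖z k - z (k - 1)‖² ≤ H (z (k - 1))`. As `L < 1/(4λ)` and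
`H ≥ inf (f + g) > -∞`, the partial sums of `‖z k - z (k - 1)‖²` telescope to a bounded quantity. -/

theorem Real.summable_of_add_le {a d : ℕ → ℝ} {b : ℝ} (hd : ∀ m, 0 ≤ d m)
    (ha : ∀ m, a (m + 1) + d m ≤ a m) (hb : ∀ m, b ≤ a m) : Summable d :=
  summable_of_sum_range_le (c := a 0 - b) hd fun N =>
    calc ∑ i ∈ Finset.range N, d i ≤ ∑ i ∈ Finset.range N, (a i - a (i + 1)) :=
          Finset.sum_le_sum fun i _ => by linarith [ha i]
      _ = a 0 - a N := Finset.sum_range_sub' a N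
      _ ≤ a 0 - b := by linarith [hb N]

theorem EReal.summable_of_add_le {a : ℕ → EReal} {d : ℕ → ℝ} {b : ℝ} {N : ℕ}
    (hd : ∀ m, 0 ≤ d m) (ha : ∀ m, a (m + 1) + d m ≤ a m) (hb : ∀ m, b ≤ a m)
    (hN : a N ≠ ⊤) : Summable d := by
  have hfin : ∀ m, a (m + N) ≠ ⊤ := by
    intro m
    induction m with
    | zero => simpa using hN
    | succ m ih =>
      rw [Nat.add_right_comm]
      exact ne_top_of_le_ne_top ih <|
        (le_add_of_nonneg_right (EReal.coe_nonneg.2 (hd _))).trans (ha _)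
  have hcoe : ∀ m, ((a (m + N)).toReal : EReal) = a (m + N) := fun m =>
    EReal.coe_toReal (hfin m) (ne_bot_of_le_ne_bot (EReal.coe_ne_bot b) (hb _))
  refine (summable_nat_add_iff N).1 <| Real.summable_of_add_le (a := fun m => (a (m + N)).toReal)
    (b := b) (fun m => hd _) (fun m => ?_) (fun m => ?_)
  · rw [← EReal.coe_le_coe_iff, EReal.coe_add, hcoe, hcoe, Nat.add_right_comm]
    exact ha _
  · rw [← EReal.coe_le_coe_iff, hcoe]
    exact hb _

theorem EReal.add_coe_le_add_coe {a b : EReal} {r s r' s' : ℝ} (h : a + r ≤ b + s)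
    (h' : r' - r ≤ s' - s) : a + r' ≤ b + s' :=
  calc a + r' ≤ a + ↑(r + (s' - s)) := by gcongr; linarith
    _ = a + r + ↑(s' - s) := by rw [EReal.coe_add, add_assoc]
    _ ≤ b + s + ↑(s' - s) := by gcongr
    _ = b + s' := by rw [add_assoc, ← EReal.coe_add, add_sub_cancel]

section Merit

variable {E : Type*} [NormedAddCommGroup E]

noncomputable def frbMerit (f : E → EReal) (g : E → ℝ) (lam : ℝ) (x y : E) : EReal :=
  f x + ((g x + 1 / (4 * lam) * ‖x - y‖ ^ 2 : ℝ) : EReal)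

theorem add_le_frbMerit (f : E → EReal) (g : E → ℝ) {lam : ℝ} (hlam : 0 ≤ lam) (x y : E) :
    f x + g x ≤ frbMerit f g lam x y := by
  rw [frbMerit, EReal.coe_add, ← add_assoc]
  exact le_add_of_nonneg_right (EReal.coe_nonneg.2 (by positivity))

theorem ne_top_of_mem_Prox {f : E → EReal} {lam : ℝ} {p y u : E} (hu : f u ≠ ⊤)
    (hy : y ∈ Prox lam f p) : f y ≠ ⊤ := fun htop => by
  have h := hy u
  rw [htop, EReal.top_add_coe, top_le_iff] at h
  exact (EReal.add_lt_top hu (EReal.coe_ne_top _)).ne h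

end Merit

section Smooth

variable {E : Type*} [NormedAddCommGroup E] [InnerProductSpace ℝ E]

def frbForward (lam : ℝ) (g' : E → E) (x₀ x₁ : E) : E :=
  x₁ + lam • (g' x₀ - g' x₁) - lam • g' x₁

variable [CompleteSpace E] {g : E → ℝ} {g' : E → E} {L : ℝ}

theorem hasDerivAt_comp_add_smul_of_hasGradientAt (hg : ∀ x, HasGradientAt g (g' x) x)
    (p d : E) (t : ℝ) :
    HasDerivAt (fun t : ℝ => g (p + t • d)) (inner ℝ (g' (p + t • d)) d) t := by
  have hline : HasDerivAt (fun t : ℝ => p + t • d) d t := by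
    simpa using ((hasDerivAt_id t).smul_const d).const_add p
  have h := (hg (p + t • d)).hasFDerivAt.comp_hasDerivAt t hline
  simp only [InnerProductSpace.toDual_apply_apply] at h
  exact h

theorem le_add_inner_add_sq_of_lipschitz_gradient (hg : ∀ x, HasGradientAt g (g' x) x)
    (hlip : ∀ x y, ‖g' x - g' y‖ ≤ L * ‖x - y‖) (p q : E) :
    g q ≤ g p + inner ℝ (g' p) (q - p) + L / 2 * ‖q - p‖ ^ 2 := by
  set d := q - p
  set ψ : ℝ → ℝ := fun t => g (p + t • d) - t * inner ℝ (g' p) d - L / 2 * t ^ 2 * ‖d‖ ^ 2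
  have hψ : ∀ t, HasDerivAt ψ
      (inner ℝ (g' (p + t • d)) d - inner ℝ (g' p) d - L * t * ‖d‖ ^ 2) t := fun t => by
    have := (((hasDerivAt_comp_add_smul_of_hasGradientAt hg p d t).sub
      ((hasDerivAt_id t).mul_const (inner ℝ (g' p) d))).sub
      (((hasDerivAt_pow 2 t).const_mul (L / 2)).mul_const (‖d‖ ^ 2)))
    exact this.congr_deriv (by push_cast; ring)
  have hψ' : ∀ t ∈ interior (Set.Icc (0 : ℝ) 1), deriv ψ t ≤ 0 := fun t ht => by
    rw [interior_Icc] at ht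
    rw [(hψ t).deriv, ← inner_sub_left]
    calc inner ℝ (g' (p + t • d) - g' p) d - L * t * ‖d‖ ^ 2
        ≤ ‖g' (p + t • d) - g' p‖ * ‖d‖ - L * t * ‖d‖ ^ 2 := by
          gcongr; exact real_inner_le_norm _ _
      _ ≤ L * ‖t • d‖ * ‖d‖ - L * t * ‖d‖ ^ 2 := by
          gcongr; simpa using hlip (p + t • d) p
      _ = 0 := by rw [norm_smul, Real.norm_of_nonneg ht.1.le]; ring
  have hanti := antitoneOn_of_deriv_nonpos (convex_Icc 0 1)
    (HasDerivAt.continuousOn fun t _ => hψ t)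
    (fun t _ => (hψ t).differentiableAt.differentiableWithinAt) hψ'
  have h10 := hanti (Set.left_mem_Icc.2 zero_le_one) (Set.right_mem_Icc.2 zero_le_one)
    zero_le_one
  simp only [ψ, d, one_smul, zero_smul, add_zero, add_sub_cancel] at h10
  linarith

theorem frb_smooth_decrease (hg : ∀ x, HasGradientAt g (g' x) x)
    (hlip : ∀ x y, ‖g' x - g' y‖ ≤ L * ‖x - y‖) (hL : 0 ≤ L) {lam : ℝ} (hlam : 0 < lam)
    (x₀ x₁ x₂ : E) :
    g x₂ + 1 / (4 * lam) * ‖x₂ - x₁‖ ^ 2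
        + (1 / (4 * lam) - L) * (‖x₂ - x₁‖ ^ 2 + ‖x₁ - x₀‖ ^ 2)
        - 1 / (2 * lam) * ‖frbForward lam g' x₀ x₁ - x₂‖ ^ 2
      ≤ g x₁ + 1 / (4 * lam) * ‖x₁ - x₀‖ ^ 2
        - 1 / (2 * lam) * ‖frbForward lam g' x₀ x₁ - x₁‖ ^ 2 := by
  set p := frbForward lam g' x₀ x₁
  have hp : p - x₁ = lam • (g' x₀ - g' x₁) - lam • g' x₁ := by simp only [p, frbForward]; abel
  have hprox : 1 / (2 * lam) * ‖p - x₂‖ ^ 2 - 1 / (2 * lam) * ‖p - x₁‖ ^ 2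
      = 1 / (2 * lam) * ‖x₂ - x₁‖ ^ 2 - inner ℝ (g' x₀ - g' x₁) (x₂ - x₁)
        + inner ℝ (g' x₁) (x₂ - x₁) := by
    rw [show p - x₂ = (p - x₁) - (x₂ - x₁) by abel, norm_sub_sq_real, hp, inner_sub_left,
      real_inner_smul_left, real_inner_smul_left]
    field_simp
    ring
  have hdesc := le_add_inner_add_sq_of_lipschitz_gradient hg hlip x₁ x₂
  have hcross : inner ℝ (g' x₀ - g' x₁) (x₂ - x₁)
      ≤ L / 2 * (‖x₂ - x₁‖ ^ 2 + ‖x₁ - x₀‖ ^ 2) := by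
    have hl : ‖g' x₀ - g' x₁‖ ≤ L * ‖x₁ - x₀‖ := by simpa [norm_sub_rev] using hlip x₀ x₁
    nlinarith [real_inner_le_norm (g' x₀ - g' x₁) (x₂ - x₁), norm_nonneg (x₂ - x₁),
      sq_nonneg (‖x₂ - x₁‖ - ‖x₁ - x₀‖)]
  have hhalf : 1 / (2 * lam) * ‖x₂ - x₁‖ ^ 2 = 2 * (1 / (4 * lam) * ‖x₂ - x₁‖ ^ 2) := by
    field_simp; ring
  linarith [mul_nonneg hL (sq_nonneg ‖x₁ - x₀‖)]

theorem frbMerit_add_le_of_mem_Prox (f : E → EReal) (hg : ∀ x, HasGradientAt g (g' x) x)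
    (hlip : ∀ x y, ‖g' x - g' y‖ ≤ L * ‖x - y‖) (hL : 0 ≤ L) {lam : ℝ} (hlam : 0 < lam)
    {x₀ x₁ x₂ : E} (hx₂ : x₂ ∈ Prox lam f (frbForward lam g' x₀ x₁)) :
    frbMerit f g lam x₂ x₁ + (((1 / (4 * lam) - L) * (‖x₂ - x₁‖ ^ 2 + ‖x₁ - x₀‖ ^ 2) : ℝ) : EReal)
      ≤ frbMerit f g lam x₁ x₀ := by
  rw [frbMerit, add_assoc, ← EReal.coe_add, frbMerit]
  refine EReal.add_coe_le_add_coe (hx₂ x₁) ?_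
  linarith [frb_smooth_decrease hg hlip hL hlam x₀ x₁ x₂]

end Smooth

open Filter Topology

noncomputable section

variable {n : ℕ}

theorem frb_merit_monotone_and_summable_general
    (f : EuclideanSpace ℝ (Fin n) → EReal)
    (hproper : ProperFn f)
    (g : EuclideanSpace ℝ (Fin n) → ℝ)
    (g' : EuclideanSpace ℝ (Fin n) → EuclideanSpace ℝ (Fin n))
    (hdiff : ∀ x, HasGradientAt g (g' x) x)
    (L : ℝ) (hL : 0 < L) (hlip : ∀ x y, ‖g' x - g' y‖ ≤ L * ‖x - y‖)
    (lam : ℝ) (hlam0 : 0 < lam) (hlam1 : lam < 1 / (4 * L))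
    (hinf : ∃ b : ℝ, ∀ x, (b : EReal) ≤ f x + (g x : EReal))
    (x : ℕ → EuclideanSpace ℝ (Fin n))
    (hscheme : ∀ k : ℕ, 1 ≤ k →
      x (k + 1) ∈ Prox lam f
        (x k + lam • (g' (x (k - 1)) - g' (x k)) - lam • g' (x k)))
    (z : ℕ → WithLp 2 (EuclideanSpace ℝ (Fin n) × EuclideanSpace ℝ (Fin n)))
    (hz : ∀ k, z k = (WithLp.equiv 2 _).symm (x (k + 1), x k))
    (Hf : WithLp 2 (EuclideanSpace ℝ (Fin n) × EuclideanSpace ℝ (Fin n)) → EReal)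
    (hH : ∀ p, Hf p =
      f ((WithLp.equiv 2 _ p).1) +
        ((g ((WithLp.equiv 2 _ p).1) +
          1 / (4 * lam) * ‖(WithLp.equiv 2 _ p).1 - (WithLp.equiv 2 _ p).2‖ ^ 2 : ℝ) : EReal)) :
    (∀ k : ℕ, 1 ≤ k → Hf (z k) ≤ Hf (z (k - 1))) ∧
    (∃ l : EReal, Tendsto (fun k => Hf (z k)) atTop (nhds l)) ∧
    Summable (fun k => ‖z (k + 1) - z k‖ ^ 2) ∧
    Tendsto (fun k => ‖z (k + 1) - z k‖) atTop (nhds 0) := by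
  obtain ⟨b, hb⟩ := hinf
  obtain ⟨-, u, hu⟩ := hproper
  have hc : 0 < 1 / (4 * lam) - L := by
    rw [sub_pos, lt_div_iff₀ (by positivity)]
    rw [lt_div_iff₀ (by positivity)] at hlam1
    linarith
  have hHf : ∀ m, Hf (z m) = frbMerit f g lam (x (m + 1)) (x m) := fun m => by
    rw [hH, hz]; rfl
  have hz_sq : ∀ m, ‖z (m + 1) - z m‖ ^ 2 = ‖x (m + 2) - x (m + 1)‖ ^ 2 + ‖x (m + 1) - x m‖ ^ 2 :=
    fun m => by rw [hz, hz, WithLp.prod_norm_sq_eq_of_L2]; rfl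
  have hprox : ∀ m, x (m + 2) ∈ Prox lam f (frbForward lam g' (x m) (x (m + 1))) := fun m =>
    hscheme (m + 1) le_add_self
  have hstep : ∀ m, Hf (z (m + 1)) + (((1 / (4 * lam) - L) * ‖z (m + 1) - z m‖ ^ 2 : ℝ) : EReal)
      ≤ Hf (z m) := fun m => by
    rw [hHf, hHf, hz_sq]
    exact frbMerit_add_le_of_mem_Prox f hdiff hlip hL.le hlam0 (hprox m)
  have hanti : Antitone fun k => Hf (z k) := antitone_nat_of_succ_le fun m =>
    (le_add_of_nonneg_right (EReal.coe_nonneg.2 (by positivity))).trans (hstep m)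
  have hsum : Summable fun k => ‖z (k + 1) - z k‖ ^ 2 := by
    -- `x 1` is not a prox point, so `Hf (z 0)` may be `⊤`; the first finite term is `Hf (z 1)`.
    refine (summable_mul_left_iff hc.ne').1 (EReal.summable_of_add_le (a := fun k => Hf (z k)) (N := 1) (b := b)
      (fun m => by positivity) hstep (fun m => ?_) ?_)
    · rw [hHf]; exact (hb _).trans (add_le_frbMerit f g hlam0.le _ _)
    · rw [hHf, frbMerit]
      exact (EReal.add_lt_top (ne_top_of_mem_Prox hu (hprox 0)) (EReal.coe_ne_top _)).ne
  refine ⟨fun k _ => hanti (Nat.sub_le k 1), ⟨_, tendsto_atTop_iInf hanti⟩, hsum, ?_⟩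
  simpa [Real.sqrt_sq (norm_nonneg _)] using hsum.tendsto_atTop_zero.sqrt

theorem frb_merit_monotone_and_summable
    (f : EuclideanSpace ℝ (Fin n) → EReal)
    (hproper : ProperFn f) (hlsc : LowerSemicontinuous f)
    (lf : ℝ) (hlf : 0 < lf) (hpb : ProxBddWith f lf)
    (g : EuclideanSpace ℝ (Fin n) → ℝ)
    (g' : EuclideanSpace ℝ (Fin n) → EuclideanSpace ℝ (Fin n))
    (hdiff : ∀ x, HasGradientAt g (g' x) x)
    (L : ℝ) (hL : 0 < L) (hlip : ∀ x y, ‖g' x - g' y‖ ≤ L * ‖x - y‖)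
    (lam : ℝ) (hlam0 : 0 < lam) (hlam1 : lam < 1 / (4 * L)) (hlam2 : lam < lf)
    (hinf : ∃ b : ℝ, ∀ x, (b : EReal) ≤ f x + (g x : EReal))
    (x : ℕ → EuclideanSpace ℝ (Fin n))
    (hscheme : ∀ k : ℕ, 1 ≤ k →
      x (k + 1) ∈ Prox lam f
        (x k + lam • (g' (x (k - 1)) - g' (x k)) - lam • g' (x k)))
    (z : ℕ → WithLp 2 (EuclideanSpace ℝ (Fin n) × EuclideanSpace ℝ (Fin n)))
    (hz : ∀ k, z k = (WithLp.equiv 2 _).symm (x (k + 1), x k))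
    (Hf : WithLp 2 (EuclideanSpace ℝ (Fin n) × EuclideanSpace ℝ (Fin n)) → EReal)
    (hH : ∀ p, Hf p =
      f ((WithLp.equiv 2 _ p).1) +
        ((g ((WithLp.equiv 2 _ p).1) +
          1 / (4 * lam) * ‖(WithLp.equiv 2 _ p).1 - (WithLp.equiv 2 _ p).2‖ ^ 2 : ℝ) : EReal)) :
    (∀ k : ℕ, 1 ≤ k → Hf (z k) ≤ Hf (z (k - 1))) ∧
    (∃ l : EReal, Tendsto (fun k => Hf (z k)) atTop (nhds l)) ∧
    Summable (fun k => ‖z (k + 1) - z k‖ ^ 2) ∧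
    Tendsto (fun k => ‖z (k + 1) - z k‖) atTop (nhds 0) :=
  frb_merit_monotone_and_summable_general f hproper g g' hdiff L hL hlip lam hlam0 hlam1 hinf x
    hscheme z hz Hf hH
end
end

section
/- Let (x_k) be generated by FRB with step-size λ > 0 and let z_k = (x_{k+1}, x_k). Define p_{k+1} = (1/λ)(x_k − x_{k+1}) + ∇g(x_{k+1}) − 2∇g(x_k) + ∇g(x_{k−1}), A_{k+1} = p_{k+1} + (1/(2λ))(x_{k+1} − x_k), B_{k+1} = (1/(2λ))(x_k − x_{k+1}). Then (A_{k+1}, B_{k+1}) ∈ ∂H(z_k) and ‖(A_{k+1}, B_{k+1})‖ ≤ √2 (L + 2/λ) ‖z_k − z_{k−1}‖. -/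
open Filter Topology

variable {H : Type*} [NormedAddCommGroup H] [InnerProductSpace ℝ H]

/-! The prox inequality defining `x_{k+1}` says that `(y_k - λ∇g(x_k) - x_{k+1}) / λ` is a Fréchet
subgradient of `f` at `x_{k+1}`. Lifting it to the first coordinate and adding the gradient
`(∇g(x_{k+1}) + (x_{k+1} - x_k)/(2λ), (x_k - x_{k+1})/(2λ))` of the smooth part
`(u, v) ↦ g u + ‖u - v‖² / (4λ)` of `H` gives exactly `(A_{k+1}, B_{k+1})`, a Fréchet and hence a
limiting subgradient of `H` at `z_k`. For the bound, write
`A_{k+1} = (x_k - x_{k+1})/(2λ) + (∇g(x_{k+1}) - ∇g(x_k)) - (∇g(x_k) - ∇g(x_{k-1}))`, use the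
Lipschitz bound on `∇g`, and `‖a‖ + ‖b‖ ≤ √2 ‖(a, b)‖` in `ℓ²`. -/

namespace EReal

lemma add_coe_le_of_add_coe_le_add_coe {x y : EReal} {a b r : ℝ} (h : x + a ≤ y + b)
    (hr : r ≤ a - b) : x + r ≤ y := by
  refine (addLECancellable_coe b).add_le_add_iff_right.mp (le_trans ?_ h)
  rw [add_assoc, ← coe_add]
  exact add_le_add_right (EReal.coe_le_coe_iff.mpr (by linarith)) x

end EReal

section

variable {E F : Type*} [NormedAddCommGroup E] [NormedAddCommGroup F]

lemma ne_top_of_mem_prox {lam : ℝ} {f : E → EReal} {q p u : E} (hp : p ∈ Prox lam f q)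
    (hu : f u ≠ ⊤) : f p ≠ ⊤ := by
  intro h
  have := hp u
  rw [h, EReal.top_add_coe, top_le_iff] at this
  exact (EReal.add_lt_top hu (EReal.coe_ne_top _)).ne this

lemma WithLp.prod_norm_le_norm_fst_add_norm_snd (p : WithLp 2 (E × F)) :
    ‖p‖ ≤ ‖p.fst‖ + ‖p.snd‖ := by
  rw [← pow_le_pow_iff_left₀ (norm_nonneg p) (by positivity) two_ne_zero,
    WithLp.prod_norm_sq_eq_of_L2]
  nlinarith [norm_nonneg p.fst, norm_nonneg p.snd]

lemma WithLp.norm_fst_add_norm_snd_le (p : WithLp 2 (E × F)) :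
    ‖p.fst‖ + ‖p.snd‖ ≤ √2 * ‖p‖ := by
  rw [← Real.sqrt_sq (norm_nonneg p), ← Real.sqrt_mul zero_le_two, WithLp.prod_norm_sq_eq_of_L2]
  exact Real.le_sqrt_of_sq_le (by nlinarith [sq_nonneg (‖p.fst‖ - ‖p.snd‖)])

variable [InnerProductSpace ℝ E] [InnerProductSpace ℝ F]

lemma fsubd_of_mem_prox {lam : ℝ} (hlam : 0 < lam) {f : E → EReal} {q p : E}
    (hp : p ∈ Prox lam f q) (hfin : f p ≠ ⊤) : FSubd f p ((1 / lam) • (q - p)) := by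
  refine ⟨hfin, fun ε hε => ⟨2 * lam * ε, by positivity, fun u hu => ?_⟩⟩
  refine EReal.add_coe_le_of_add_coe_le_add_coe (hp u) ?_
  -- the prox inequality is the subgradient inequality up to `‖u - p‖² / (2λ) ≤ ε ‖u - p‖`
  have hexpand : ‖q - u‖ ^ 2 = ‖q - p‖ ^ 2 - 2 * inner ℝ (q - p) (u - p) + ‖u - p‖ ^ 2 := by
    rw [show q - u = (q - p) - (u - p) by abel, norm_sub_sq_real]
  have hsmall : ‖u - p‖ ^ 2 ≤ 2 * lam * ε * ‖u - p‖ := by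
    rw [sq]; exact mul_le_mul_of_nonneg_right hu.le (norm_nonneg _)
  rw [hexpand, real_inner_smul_left]
  field_simp
  linarith

lemma FSubd.lSubd {f : E → EReal} {x v : E} (h : FSubd f x v) : LSubd f x v :=
  ⟨fun _ => x, fun _ => v, tendsto_const_nhds, tendsto_const_nhds, fun _ => h, tendsto_const_nhds⟩

lemma FSubd.add_hasGradientAt [CompleteSpace E] {f : E → EReal} {h : E → ℝ} {x v w : E}
    (hf : FSubd f x v) (hh : HasGradientAt h w x) :
    FSubd (fun y => f y + (h y : EReal)) x (v + w) := by
  refine ⟨EReal.add_ne_top hf.1 (EReal.coe_ne_top _), fun ε hε => ?_⟩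
  obtain ⟨δ₁, hδ₁, hf'⟩ := hf.2 (ε / 2) (half_pos hε)
  obtain ⟨δ₂, hδ₂, hh'⟩ := Metric.eventually_nhds_iff.mp
    ((hasGradientAt_iff_isLittleO.mp hh).def (half_pos hε))
  refine ⟨min δ₁ δ₂, lt_min hδ₁ hδ₂, fun y hy => ?_⟩
  have hlin : h x + (inner ℝ w (y - x) - ε / 2 * ‖y - x‖) ≤ h y := by
    have := hh' (y := y) (by rw [dist_eq_norm]; exact hy.trans_le (min_le_right _ _))
    rw [Real.norm_eq_abs] at this
    linarith [neg_abs_le (h y - h x - inner ℝ w (y - x))]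
  calc f x + (h x : EReal) + ((inner ℝ (v + w) (y - x) - ε * ‖y - x‖ : ℝ) : EReal)
      = (f x + ((inner ℝ v (y - x) - ε / 2 * ‖y - x‖ : ℝ) : EReal))
          + ((h x + (inner ℝ w (y - x) - ε / 2 * ‖y - x‖) : ℝ) : EReal) := by
        rw [add_assoc, add_assoc, ← EReal.coe_add, ← EReal.coe_add, inner_add_left]
        ring_nf
    _ ≤ f y + (h y : EReal) :=
        add_le_add (hf' y (hy.trans_le (min_le_left _ _))) (EReal.coe_le_coe_iff.mpr hlin)

lemma FSubd.comp_fst {f : E → EReal} {x v : E} (hf : FSubd f x v) (y : F) :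
    FSubd (fun p : WithLp 2 (E × F) => f p.fst) (WithLp.toLp 2 (x, y))
      (WithLp.toLp 2 (v, 0)) := by
  refine ⟨hf.1, fun ε hε => ?_⟩
  obtain ⟨δ, hδ, hf'⟩ := hf.2 ε hε
  refine ⟨δ, hδ, fun p hp => ?_⟩
  have hfst : ‖p.fst - x‖ ≤ ‖p - WithLp.toLp 2 (x, y)‖ :=
    WithLp.norm_fst_le E (p - WithLp.toLp 2 (x, y))
  have hinner :
      inner ℝ (WithLp.toLp 2 (v, 0)) (p - WithLp.toLp 2 (x, y)) = inner ℝ v (p.fst - x) := by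
    simp [WithLp.prod_inner_apply]
  calc f x + ((inner ℝ (WithLp.toLp 2 (v, 0)) (p - WithLp.toLp 2 (x, y))
        - ε * ‖p - WithLp.toLp 2 (x, y)‖ : ℝ) : EReal)
      ≤ f x + ((inner ℝ v (p.fst - x) - ε * ‖p.fst - x‖ : ℝ) : EReal) := by
        rw [hinner]
        gcongr
    _ ≤ f p.fst := hf' _ (hfst.trans_lt hp)

lemma hasGradientAt_comp_fst_add_mul_norm_sub_sq [CompleteSpace E] {g : E → ℝ} {w x : E}
    (hg : HasGradientAt g w x) (y : E) (c : ℝ) :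
    HasGradientAt (fun p : WithLp 2 (E × E) => g p.fst + c * ‖p.fst - p.snd‖ ^ 2)
      (WithLp.toLp 2 (w + (2 * c) • (x - y), -((2 * c) • (x - y)))) (WithLp.toLp 2 (x, y)) := by
  rw [hasGradientAt_iff_hasFDerivAt]
  have hg' := hg.hasFDerivAt.comp (WithLp.toLp 2 (x, y)) (WithLp.fstL 2 ℝ E E).hasFDerivAt
  have hq := ((WithLp.fstL 2 ℝ E E - WithLp.sndL 2 ℝ E E).hasFDerivAt
    (x := WithLp.toLp 2 (x, y)).norm_sq).const_mul c
  refine (hg'.add hq).congr_fderiv ?_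
  ext p
  simp [WithLp.prod_inner_apply, inner_add_left, inner_sub_left, real_inner_smul_left]
  ring

lemma frb_subgradient_norm_le {g' : E → E} {L lam : ℝ} (hL : 0 ≤ L) (hlam : 0 < lam)
    (hlip : ∀ x y, ‖g' x - g' y‖ ≤ L * ‖x - y‖) (x₀ x₁ x₂ : E) :
    ‖WithLp.toLp 2 ((1 / lam) • (x₁ - x₂) + g' x₂ - (2 : ℝ) • g' x₁ + g' x₀
        + (1 / (2 * lam)) • (x₂ - x₁), (1 / (2 * lam)) • (x₁ - x₂))‖
      ≤ √2 * (L + 2 / lam) * ‖WithLp.toLp 2 (x₂ - x₁, x₁ - x₀)‖ := by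
  set a := ‖x₂ - x₁‖
  set b := ‖x₁ - x₀‖
  have hc : ‖(1 / (2 * lam)) • (x₁ - x₂)‖ = 1 / (2 * lam) * a := by
    rw [norm_smul, Real.norm_of_nonneg (by positivity), norm_sub_rev]
  have hA : ‖(1 / lam) • (x₁ - x₂) + g' x₂ - (2 : ℝ) • g' x₁ + g' x₀
      + (1 / (2 * lam)) • (x₂ - x₁)‖ ≤ 1 / (2 * lam) * a + L * a + L * b := by
    have hsplit : (1 / lam) • (x₁ - x₂) + g' x₂ - (2 : ℝ) • g' x₁ + g' x₀
        + (1 / (2 * lam)) • (x₂ - x₁)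
        = (1 / (2 * lam)) • (x₁ - x₂) + (g' x₂ - g' x₁) - (g' x₁ - g' x₀) := by
      match_scalars <;> field_simp <;> ring
    rw [hsplit]
    exact norm_sub_le_of_le (norm_add_le_of_le hc.le (hlip x₂ x₁)) (hlip x₁ x₀)
  have hab : a + b ≤ √2 * ‖WithLp.toLp 2 (x₂ - x₁, x₁ - x₀)‖ :=
    WithLp.norm_fst_add_norm_snd_le (WithLp.toLp 2 (x₂ - x₁, x₁ - x₀))
  calc _ ≤ (1 / (2 * lam) * a + L * a + L * b) + 1 / (2 * lam) * a :=
        (WithLp.prod_norm_le_norm_fst_add_norm_snd _).trans (add_le_add hA hc.le)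
    _ = L * (a + b) + 1 / lam * a := by field_simp; ring
    _ ≤ L * (a + b) + 2 / lam * (a + b) := by
        have : 1 / lam * a ≤ 2 / lam * (a + b) := by
          rw [div_mul_eq_mul_div, div_mul_eq_mul_div]
          gcongr <;> linarith [norm_nonneg (x₁ - x₀)]
        linarith
    _ = (L + 2 / lam) * (a + b) := by ring
    _ ≤ (L + 2 / lam) * (√2 * ‖WithLp.toLp 2 (x₂ - x₁, x₁ - x₀)‖) := by gcongr
    _ = _ := by ring

end

noncomputable section

variable {n : ℕ}

theorem frb_subgradient_lower_bound_general
    (f : EuclideanSpace ℝ (Fin n) → EReal)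
    (hproper : ProperFn f)
    (g : EuclideanSpace ℝ (Fin n) → ℝ)
    (g' : EuclideanSpace ℝ (Fin n) → EuclideanSpace ℝ (Fin n))
    (hdiff : ∀ x, HasGradientAt g (g' x) x)
    (L : ℝ) (hL : 0 < L) (hlip : ∀ x y, ‖g' x - g' y‖ ≤ L * ‖x - y‖)
    (lam : ℝ) (hlam0 : 0 < lam)
    (x : ℕ → EuclideanSpace ℝ (Fin n))
    (hscheme : ∀ k : ℕ, 1 ≤ k →
      x (k + 1) ∈ Prox lam f
        (x k + lam • (g' (x (k - 1)) - g' (x k)) - lam • g' (x k)))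
    (z : ℕ → WithLp 2 (EuclideanSpace ℝ (Fin n) × EuclideanSpace ℝ (Fin n)))
    (hz : ∀ k, z k = (WithLp.equiv 2 _).symm (x (k + 1), x k))
    (Hf : WithLp 2 (EuclideanSpace ℝ (Fin n) × EuclideanSpace ℝ (Fin n)) → EReal)
    (hH : ∀ p, Hf p =
      f ((WithLp.equiv 2 _ p).1) +
        ((g ((WithLp.equiv 2 _ p).1) +
          1 / (4 * lam) * ‖(WithLp.equiv 2 _ p).1 - (WithLp.equiv 2 _ p).2‖ ^ 2 : ℝ) : EReal)) :
    ∀ k : ℕ, 1 ≤ k →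
      LSubd Hf (z k)
        ((WithLp.equiv 2 _).symm
          ((1 / lam) • (x k - x (k + 1)) + g' (x (k + 1)) - (2 : ℝ) • g' (x k) + g' (x (k - 1))
              + (1 / (2 * lam)) • (x (k + 1) - x k),
            (1 / (2 * lam)) • (x k - x (k + 1)))) ∧
      ‖(WithLp.equiv 2 (EuclideanSpace ℝ (Fin n) × EuclideanSpace ℝ (Fin n))).symm
          ((1 / lam) • (x k - x (k + 1)) + g' (x (k + 1)) - (2 : ℝ) • g' (x k) + g' (x (k - 1))
              + (1 / (2 * lam)) • (x (k + 1) - x k),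
            (1 / (2 * lam)) • (x k - x (k + 1)))‖
        ≤ Real.sqrt 2 * (L + 2 / lam) * ‖z k - z (k - 1)‖ := by
  intro k hk
  obtain ⟨-, u, hu⟩ := hproper
  have hprox := hscheme k hk
  have hsubd := ((fsubd_of_mem_prox hlam0 hprox (ne_top_of_mem_prox hprox hu)).comp_fst
    (x k)).add_hasGradientAt
      (hasGradientAt_comp_fst_add_mul_norm_sub_sq (hdiff (x (k + 1))) (x k) (1 / (4 * lam)))
  have hgrad : ((1 / lam) • (x k + lam • (g' (x (k - 1)) - g' (x k)) - lam • g' (x k)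
        - x (k + 1)), (0 : EuclideanSpace ℝ (Fin n)))
      + (g' (x (k + 1)) + (2 * (1 / (4 * lam))) • (x (k + 1) - x k),
          -((2 * (1 / (4 * lam))) • (x (k + 1) - x k)))
      = ((1 / lam) • (x k - x (k + 1)) + g' (x (k + 1)) - (2 : ℝ) • g' (x k) + g' (x (k - 1))
          + (1 / (2 * lam)) • (x (k + 1) - x k), (1 / (2 * lam)) • (x k - x (k + 1))) := by
    rw [Prod.mk_add_mk]
    congr 1 <;> match_scalars <;> field_simp <;> ring
  rw [← WithLp.toLp_add, hgrad] at hsubd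
  have hdiff_z : z k - z (k - 1) = WithLp.toLp 2 (x (k + 1) - x k, x k - x (k - 1)) := by
    rw [hz, hz, Nat.sub_add_cancel hk]
    rfl
  refine ⟨?_, ?_⟩
  · rw [funext hH, hz]
    exact hsubd.lSubd
  · rw [hdiff_z]
    exact frb_subgradient_norm_le hL.le hlam0 hlip _ _ _

theorem frb_subgradient_lower_bound
    (f : EuclideanSpace ℝ (Fin n) → EReal)
    (hproper : ProperFn f) (hlsc : LowerSemicontinuous f)
    (lf : ℝ) (hlf : 0 < lf) (hpb : ProxBddWith f lf)
    (g : EuclideanSpace ℝ (Fin n) → ℝ)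
    (g' : EuclideanSpace ℝ (Fin n) → EuclideanSpace ℝ (Fin n))
    (hdiff : ∀ x, HasGradientAt g (g' x) x)
    (L : ℝ) (hL : 0 < L) (hlip : ∀ x y, ‖g' x - g' y‖ ≤ L * ‖x - y‖)
    (lam : ℝ) (hlam0 : 0 < lam) (hlam2 : lam < lf)
    (x : ℕ → EuclideanSpace ℝ (Fin n))
    (hscheme : ∀ k : ℕ, 1 ≤ k →
      x (k + 1) ∈ Prox lam f
        (x k + lam • (g' (x (k - 1)) - g' (x k)) - lam • g' (x k)))
    (z : ℕ → WithLp 2 (EuclideanSpace ℝ (Fin n) × EuclideanSpace ℝ (Fin n)))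
    (hz : ∀ k, z k = (WithLp.equiv 2 _).symm (x (k + 1), x k))
    (Hf : WithLp 2 (EuclideanSpace ℝ (Fin n) × EuclideanSpace ℝ (Fin n)) → EReal)
    (hH : ∀ p, Hf p =
      f ((WithLp.equiv 2 _ p).1) +
        ((g ((WithLp.equiv 2 _ p).1) +
          1 / (4 * lam) * ‖(WithLp.equiv 2 _ p).1 - (WithLp.equiv 2 _ p).2‖ ^ 2 : ℝ) : EReal)) :
    ∀ k : ℕ, 1 ≤ k →
      LSubd Hf (z k)
        ((WithLp.equiv 2 _).symm
          ((1 / lam) • (x k - x (k + 1)) + g' (x (k + 1)) - (2 : ℝ) • g' (x k) + g' (x (k - 1))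
              + (1 / (2 * lam)) • (x (k + 1) - x k),
            (1 / (2 * lam)) • (x k - x (k + 1)))) ∧
      ‖(WithLp.equiv 2 (EuclideanSpace ℝ (Fin n) × EuclideanSpace ℝ (Fin n))).symm
          ((1 / lam) • (x k - x (k + 1)) + g' (x (k + 1)) - (2 : ℝ) • g' (x k) + g' (x (k - 1))
              + (1 / (2 * lam)) • (x (k + 1) - x k),
            (1 / (2 * lam)) • (x k - x (k + 1)))‖
        ≤ Real.sqrt 2 * (L + 2 / lam) * ‖z k - z (k - 1)‖ :=
  frb_subgradient_lower_bound_general f hproper g g' hdiff L hL hlip lam hlam0 x hscheme z hz Hf hH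
end
end

section
/- Let (x_k) be generated by FRB under the descent hypotheses, and suppose the sequence z_k = (x_{k+1}, x_k) is bounded with a subsequence z_{k_l} → z* = (x*, y*). Then x* = y*, H(z_k) → f(x*) + g(x*), and 0 ∈ ∂f(x*) + ∇g(x*), i.e., x* is a stationary point of F = f + g. -/
open Filter Topology

variable {H : Type*} [NormedAddCommGroup H] [InnerProductSpace ℝ H]

/-! The Lyapunov values `H(z_k)` decrease by at least `(1/(4λ) - L)‖x_{k+1} - x_k‖²` per step
(optimality of the prox step against the previous iterate, plus the descent lemma for `g`) and
are bounded below, so they converge and the steps `x_{k+1} - x_k` tend to `0`. Along the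
subsequence, `x_{k-1}`, `x_k` and `x_{k+1}` then share the limit `x*`, forcing `x* = y*`.
Lower semicontinuity and the prox inequality tested at `x*` give `f(x_{k_l+1}) → f(x*)`, which
identifies the limit of `H(z_k)`; the Fréchet subgradients `(y_k - λ∇g(x_k) - x_{k+1})/λ` of `f`
at `x_{k+1}` converge to `-∇g(x*)`. -/

variable {E : Type*} [NormedAddCommGroup E]

theorem descent_lemma [InnerProductSpace ℝ E] [CompleteSpace E] {g : E → ℝ} {g' : E → E} {L : ℝ}
    (hg : ∀ x, HasGradientAt g (g' x) x) (hlip : ∀ x y, ‖g' x - g' y‖ ≤ L * ‖x - y‖)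
    (a b : E) : g b ≤ g a + inner ℝ (g' a) (b - a) + L / 2 * ‖b - a‖ ^ 2 := by
  set v := b - a
  let ψ : ℝ → ℝ := fun t => g (a + t • v) - t * inner ℝ (g' a) v - L / 2 * t ^ 2 * ‖v‖ ^ 2
  let ψ' : ℝ → ℝ := fun t => inner ℝ (g' (a + t • v) - g' a) v - L * t * ‖v‖ ^ 2
  have hψ : ∀ t, HasDerivAt ψ (ψ' t) t := fun t => by
    have hline : HasDerivAt (fun t : ℝ => a + t • v) v t := by
      simpa using ((hasDerivAt_id t).smul_const v).const_add a
    have := (((hg _).hasFDerivAt.comp_hasDerivAt t hline).sub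
      ((hasDerivAt_id t).mul_const (inner ℝ (g' a) v))).sub
      (((hasDerivAt_pow 2 t).const_mul (L / 2)).mul_const (‖v‖ ^ 2))
    refine this.congr_deriv ?_
    simp only [ψ', inner_sub_left, InnerProductSpace.toDual_apply_apply]
    ring
  have hψ'_nonpos : ∀ t ∈ interior (Set.Icc (0 : ℝ) 1), ψ' t ≤ 0 := by
    rw [interior_Icc]
    rintro t ⟨ht, -⟩
    have hgrad : ‖g' (a + t • v) - g' a‖ ≤ L * (t * ‖v‖) := by
      simpa [norm_smul, abs_of_pos ht] using hlip (a + t • v) a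
    have := (real_inner_le_norm _ _).trans (mul_le_mul_of_nonneg_right hgrad (norm_nonneg v))
    simp only [ψ']
    nlinarith
  have hanti : AntitoneOn ψ (Set.Icc 0 1) :=
    antitoneOn_of_hasDerivWithinAt_nonpos (convex_Icc 0 1)
      (fun t _ => (hψ t).continuousAt.continuousWithinAt)
      (fun t _ => (hψ t).hasDerivWithinAt) hψ'_nonpos
  have := hanti (Set.left_mem_Icc.2 zero_le_one) (Set.right_mem_Icc.2 zero_le_one) zero_le_one
  simp only [ψ, v, zero_smul, add_zero, one_smul, add_sub_cancel] at this
  linarith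

theorem ne_top_of_mem_prox_s8 {f : E → EReal} {lam : ℝ} {p w : E} (hf : ProperFn f)
    (hw : w ∈ Prox lam f p) : f w ≠ ⊤ := by
  obtain ⟨u, hu⟩ := hf.2
  intro htop
  have h := hw u
  rw [htop, EReal.top_add_coe, top_le_iff, ← EReal.coe_toReal hu (hf.1 u),
    ← EReal.coe_add] at h
  exact EReal.coe_ne_top _ h

theorem toReal_add_le_of_mem_prox {f : E → EReal} {lam : ℝ} {p w : E} (hf : ProperFn f)
    (hw : w ∈ Prox lam f p) {u : E} (hu : f u ≠ ⊤) :
    (f w).toReal + 1 / (2 * lam) * ‖p - w‖ ^ 2 ≤ (f u).toReal + 1 / (2 * lam) * ‖p - u‖ ^ 2 := by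
  have h := hw u
  rwa [← EReal.coe_toReal (ne_top_of_mem_prox_s8 hf hw) (hf.1 w),
    ← EReal.coe_toReal hu (hf.1 u), ← EReal.coe_add, ← EReal.coe_add,
    EReal.coe_le_coe_iff] at h

theorem toReal_add_inner_le_of_mem_prox [InnerProductSpace ℝ E] {f : E → EReal} {lam : ℝ}
    {p w : E} (hf : ProperFn f) (hw : w ∈ Prox lam f p) (hlam : 0 < lam) {u : E} (hu : f u ≠ ⊤) :
    (f w).toReal + lam⁻¹ * inner ℝ (p - w) (u - w)
      ≤ (f u).toReal + 1 / (2 * lam) * ‖u - w‖ ^ 2 := by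
  have h := toReal_add_le_of_mem_prox hf hw hu
  rw [show p - u = (p - w) - (u - w) by abel, norm_sub_sq_real (p - w) (u - w)] at h
  have : 1 / (2 * lam) * (2 * inner ℝ (p - w) (u - w)) = lam⁻¹ * inner ℝ (p - w) (u - w) := by
    field_simp
  nlinarith

theorem fsubd_of_mem_prox_s8 [InnerProductSpace ℝ E] {f : E → EReal} {lam : ℝ} {p w : E}
    (hf : ProperFn f) (hw : w ∈ Prox lam f p) (hlam : 0 < lam) : FSubd f w (lam⁻¹ • (p - w)) := by
  refine ⟨ne_top_of_mem_prox_s8 hf hw, fun ε hε => ⟨2 * lam * ε, by positivity, fun u hu => ?_⟩⟩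
  by_cases hfu : f u = ⊤
  · simp [hfu]
  have h := toReal_add_inner_le_of_mem_prox hf hw hlam hfu
  have hquad : 1 / (2 * lam) * ‖u - w‖ ^ 2 ≤ ε * ‖u - w‖ := by
    rw [div_mul_eq_mul_div, one_mul, div_le_iff₀ (by positivity)]
    nlinarith [norm_nonneg (u - w)]
  rw [← EReal.coe_toReal (ne_top_of_mem_prox_s8 hf hw) (hf.1 w), ← EReal.coe_toReal hfu (hf.1 u),
    ← EReal.coe_add, EReal.coe_le_coe_iff, real_inner_smul_left]
  linarith

/-- The FRB prox argument `y_k - λ∇g(x_k)` for `u = x_{k-1}`, `v = x_k`. -/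
def frbArg [Module ℝ E] (lam : ℝ) (g' : E → E) (u v : E) : E := v + lam • (g' u - g' v) - lam • g' v

theorem frb_descent_step [InnerProductSpace ℝ E] [CompleteSpace E] {f : E → EReal} {g : E → ℝ}
    {g' : E → E} {L lam : ℝ} (hf : ProperFn f) (hg : ∀ x, HasGradientAt g (g' x) x)
    (hL : 0 ≤ L) (hlip : ∀ x y, ‖g' x - g' y‖ ≤ L * ‖x - y‖) (hlam : 0 < lam) {u v w : E}
    (hv : f v ≠ ⊤) (hw : w ∈ Prox lam f (frbArg lam g' u v)) :
    (f w).toReal + g w + (1 / (2 * lam) - L) * ‖w - v‖ ^ 2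
      ≤ (f v).toReal + g v + L / 2 * ‖v - u‖ ^ 2 := by
  have hprox := toReal_add_inner_le_of_mem_prox hf hw hlam hv
  have hinner : lam⁻¹ * inner ℝ (frbArg lam g' u v - w) (v - w)
      = ‖w - v‖ ^ 2 / lam - inner ℝ (g' u - g' v) (w - v) + inner ℝ (g' v) (w - v) := by
    rw [show frbArg lam g' u v - w = lam • (g' u - g' v - g' v) - (w - v) by
        simp only [frbArg, smul_sub]; abel,
      show v - w = -(w - v) by abel, inner_neg_right, inner_sub_left, real_inner_smul_left,
      inner_sub_left, real_inner_self_eq_norm_sq]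
    field_simp
    ring
  have hdesc := descent_lemma hg hlip v w
  have hcross : inner ℝ (g' u - g' v) (w - v) ≤ L * ‖v - u‖ * ‖w - v‖ :=
    (real_inner_le_norm _ _).trans (mul_le_mul_of_nonneg_right
      (by simpa [norm_sub_rev] using hlip u v) (norm_nonneg _))
  rw [hinner, norm_sub_rev v w] at hprox
  have : ‖w - v‖ ^ 2 / lam = 2 * (1 / (2 * lam) * ‖w - v‖ ^ 2) := by field_simp
  nlinarith [mul_nonneg hL (sq_nonneg (‖v - u‖ - ‖w - v‖))]

theorem exists_tendsto_and_tendsto_zero_of_sufficient_decrease {F : Type*}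
    [SeminormedAddCommGroup F] {a : ℕ → ℝ} {d : ℕ → F} {b c : ℝ} (hc : 0 < c)
    (hb : ∀ k, b ≤ a k) (hdec : ∀ k, a (k + 1) + c * ‖d k‖ ^ 2 ≤ a k) :
    (∃ A, Tendsto a atTop (𝓝 A)) ∧ Tendsto d atTop (𝓝 0) := by
  have hanti : Antitone a :=
    antitone_nat_of_succ_le fun k => by nlinarith [hdec k, sq_nonneg ‖d k‖]
  have ha := tendsto_atTop_ciInf hanti ⟨b, by rintro _ ⟨k, rfl⟩; exact hb k⟩
  refine ⟨⟨_, ha⟩, ?_⟩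
  have hgap : Tendsto (fun k => (a k - a (k + 1)) / c) atTop (𝓝 0) := by
    simpa using (ha.sub (ha.comp (tendsto_add_atTop_nat 1))).div_const c
  have hsq : Tendsto (fun k => ‖d k‖ ^ 2) atTop (𝓝 0) :=
    squeeze_zero (fun k => sq_nonneg _)
      (fun k => by rw [le_div_iff₀ hc]; linarith [hdec k]) hgap
  rw [tendsto_zero_iff_norm_tendsto_zero]
  simpa [Real.sqrt_sq (norm_nonneg _)] using hsq.sqrt

/-- `H(z_k)` as a real number; only meaningful for `1 ≤ k`, where `f (x (k + 1))` is finite. -/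
noncomputable def frbEnergy (f : E → EReal) (g : E → ℝ) (lam : ℝ) (x : ℕ → E) (k : ℕ) : ℝ :=
  (f (x (k + 1))).toReal + g (x (k + 1)) + 1 / (4 * lam) * ‖x (k + 1) - x k‖ ^ 2

theorem frbEnergy_converges_and_steps_tendsto_zero [InnerProductSpace ℝ E] [CompleteSpace E]
    {f : E → EReal} {g : E → ℝ} {g' : E → E} {L lam b : ℝ} (hf : ProperFn f)
    (hg : ∀ x, HasGradientAt g (g' x) x) (hL : 0 ≤ L)
    (hlip : ∀ x y, ‖g' x - g' y‖ ≤ L * ‖x - y‖) (hlam : 0 < lam) (hlamL : 4 * lam * L < 1)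
    (hb : ∀ y, (b : EReal) ≤ f y + (g y : EReal)) {x : ℕ → E}
    (hx : ∀ k, 1 ≤ k → x (k + 1) ∈ Prox lam f (frbArg lam g' (x (k - 1)) (x k))) :
    (∃ A, Tendsto (frbEnergy f g lam x) atTop (𝓝 A)) ∧
      Tendsto (fun k => x (k + 1) - x k) atTop (𝓝 0) := by
  have hfin : ∀ k, f (x (k + 2)) ≠ ⊤ := fun k => ne_top_of_mem_prox_s8 hf (hx (k + 1) (by omega))
  have hq : 1 / (2 * lam) = 2 * (1 / (4 * lam)) := by field_simp; ring
  have hLq : L < 1 / (4 * lam) := by rw [lt_div_iff₀ (by positivity)]; linarith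
  have hdec : ∀ k, frbEnergy f g lam x (k + 2) + (1 / (4 * lam) - L) * ‖x (k + 3) - x (k + 2)‖ ^ 2
      ≤ frbEnergy f g lam x (k + 1) := fun k => by
    have hw : x (k + 3) ∈ Prox lam f (frbArg lam g' (x (k + 1)) (x (k + 2))) :=
      hx (k + 2) (by omega)
    have := frb_descent_step hf hg hL hlip hlam (hfin k) hw
    show (f (x (k + 3))).toReal + g (x (k + 3)) + 1 / (4 * lam) * ‖x (k + 3) - x (k + 2)‖ ^ 2
        + (1 / (4 * lam) - L) * ‖x (k + 3) - x (k + 2)‖ ^ 2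
      ≤ (f (x (k + 2))).toReal + g (x (k + 2)) + 1 / (4 * lam) * ‖x (k + 2) - x (k + 1)‖ ^ 2
    rw [hq] at this
    nlinarith [sq_nonneg ‖x (k + 2) - x (k + 1)‖]
  have hbdd : ∀ k, b ≤ frbEnergy f g lam x (k + 1) := fun k => by
    have := hb (x (k + 2))
    rw [← EReal.coe_toReal (hfin k) (hf.1 _), ← EReal.coe_add, EReal.coe_le_coe_iff] at this
    simp only [frbEnergy]
    nlinarith [sq_nonneg ‖x (k + 1 + 1) - x (k + 1)‖, show 0 < 1 / (4 * lam) by positivity]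
  obtain ⟨⟨A, hA⟩, hsteps⟩ :=
    exists_tendsto_and_tendsto_zero_of_sufficient_decrease (sub_pos.2 hLq) hbdd hdec
  exact ⟨⟨A, (tendsto_add_atTop_iff_nat 1).1 hA⟩, (tendsto_add_atTop_iff_nat 2).1 hsteps⟩

theorem LowerSemicontinuousAt.le_of_tendsto {α γ ι : Type*} [TopologicalSpace α] [LinearOrder γ]
    [TopologicalSpace γ] [OrderTopology γ] [DenselyOrdered γ] {f : α → γ} {a : α}
    (hf : LowerSemicontinuousAt f a) {l : Filter ι} [l.NeBot] {u : ι → α} {c : γ}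
    (hu : Tendsto u l (𝓝 a)) (hfu : Tendsto (fun i => f (u i)) l (𝓝 c)) : f a ≤ c := by
  by_contra! hc
  obtain ⟨c', hcc', hc'a⟩ := exists_between hc
  obtain ⟨i, hi₁, hi₂⟩ :=
    ((hu.eventually (hf c' hc'a)).and (hfu.eventually (gt_mem_nhds hcc'))).exists
  exact lt_asymm hi₁ hi₂

theorem tendsto_comp_of_tendsto_comp_succ {F : Type*} [TopologicalSpace F] [AddCommGroup F]
    [IsTopologicalAddGroup F] {u : ℕ → F} {ψ : ℕ → ℕ} {a : F}
    (hu : Tendsto (fun k => u (k + 1) - u k) atTop (𝓝 0)) (hψ : Tendsto ψ atTop atTop)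
    (h : Tendsto (fun l => u (ψ l + 1)) atTop (𝓝 a)) : Tendsto (fun l => u (ψ l)) atTop (𝓝 a) := by
  simpa using h.sub (hu.comp hψ)

theorem eq_coe_of_tendsto_of_mem_prox [InnerProductSpace ℝ E] {f : E → EReal} {lam c : ℝ}
    {a p₀ : E} {y p : ℕ → E} (hf : ProperFn f) (hlsc : LowerSemicontinuousAt f a)
    (hy : ∀ l, y l ∈ Prox lam f (p l)) (hya : Tendsto y atTop (𝓝 a))
    (hp : Tendsto p atTop (𝓝 p₀)) (hfy : Tendsto (fun l => (f (y l)).toReal) atTop (𝓝 c)) :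
    f a = c := by
  have hcoe : ∀ l, f (y l) = (f (y l)).toReal := fun l =>
    (EReal.coe_toReal (ne_top_of_mem_prox_s8 hf (hy l)) (hf.1 _)).symm
  have hle : f a ≤ c := hlsc.le_of_tendsto hya <| by
    simpa only [← hcoe] using EReal.tendsto_coe.2 hfy
  have hfa : f a ≠ ⊤ := ne_top_of_le_ne_top (EReal.coe_ne_top c) hle
  rw [← EReal.coe_toReal hfa (hf.1 a)] at hle ⊢
  rw [EReal.coe_le_coe_iff] at hle
  have hnorm : ∀ {q : ℕ → E}, Tendsto q atTop (𝓝 a) →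
      Tendsto (fun l => 1 / (2 * lam) * ‖p l - q l‖ ^ 2) atTop (𝓝 (1 / (2 * lam) * ‖p₀ - a‖ ^ 2)) :=
    fun hq => ((hp.sub hq).norm.pow 2).const_mul _
  have hge : c ≤ (f a).toReal := by
    have := le_of_tendsto_of_tendsto (hfy.add (hnorm hya)) (tendsto_const_nhds.add
      (hnorm tendsto_const_nhds)) (Eventually.of_forall fun l =>
        toReal_add_le_of_mem_prox hf (hy l) hfa)
    linarith
  exact congrArg _ (le_antisymm hle hge)

theorem lsubd_of_tendsto_of_mem_prox [InnerProductSpace ℝ E] {f : E → EReal} {lam : ℝ}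
    {a p₀ : E} {y p : ℕ → E} (hf : ProperFn f) (hlam : 0 < lam)
    (hy : ∀ l, y l ∈ Prox lam f (p l)) (hya : Tendsto y atTop (𝓝 a))
    (hfy : Tendsto (fun l => f (y l)) atTop (𝓝 (f a))) (hp : Tendsto p atTop (𝓝 p₀)) :
    LSubd f a (lam⁻¹ • (p₀ - a)) :=
  ⟨y, fun l => lam⁻¹ • (p l - y l), hya, hfy, fun l => fsubd_of_mem_prox_s8 hf (hy l) hlam,
    (hp.sub hya).const_smul _⟩

theorem continuous_frbArg [NormedSpace ℝ E] {g' : E → E} (hg' : Continuous g') (lam : ℝ) :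
    Continuous fun q : E × E => frbArg lam g' q.1 q.2 := by
  unfold frbArg
  fun_prop

theorem frb_limit_value_and_lsubd [InnerProductSpace ℝ E] {f : E → EReal} {g : E → ℝ} {g' : E → E}
    {lam A : ℝ} {a : E} {x : ℕ → E} {ψ : ℕ → ℕ} (hf : ProperFn f)
    (hlsc : LowerSemicontinuousAt f a) (hgc : Continuous g) (hg'c : Continuous g')
    (hlam : 0 < lam) (hx : ∀ k, 1 ≤ k → x (k + 1) ∈ Prox lam f (frbArg lam g' (x (k - 1)) (x k)))
    (hA : Tendsto (frbEnergy f g lam x) atTop (𝓝 A))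
    (hsteps : Tendsto (fun k => x (k + 1) - x k) atTop (𝓝 0)) (hψ1 : ∀ l, 1 ≤ ψ l)
    (hψ : Tendsto ψ atTop atTop) (ha : Tendsto (fun l => x (ψ l + 1)) atTop (𝓝 a)) :
    f a = ↑(A - g a) ∧ LSubd f a (-g' a) := by
  have hx0 : Tendsto (fun l => x (ψ l)) atTop (𝓝 a) :=
    tendsto_comp_of_tendsto_comp_succ hsteps hψ ha
  have hxm : Tendsto (fun l => x (ψ l - 1)) atTop (𝓝 a) :=
    tendsto_comp_of_tendsto_comp_succ hsteps ((tendsto_sub_atTop_nat 1).comp hψ)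
      (by simpa only [Nat.sub_add_cancel (hψ1 _)] using hx0)
  have hprox : ∀ l, x (ψ l + 1) ∈ Prox lam f (frbArg lam g' (x (ψ l - 1)) (x (ψ l))) :=
    fun l => hx _ (hψ1 l)
  have hp : Tendsto (fun l => frbArg lam g' (x (ψ l - 1)) (x (ψ l))) atTop
      (𝓝 (a - lam • g' a)) := by
    have h := ((continuous_frbArg hg'c lam).tendsto (a, a)).comp (hxm.prodMk_nhds hx0)
    rwa [show frbArg lam g' a a = a - lam • g' a by simp [frbArg]] at h
  have hfval : Tendsto (fun l => (f (x (ψ l + 1))).toReal) atTop (𝓝 (A - g a)) := by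
    have h := ((hA.comp hψ).sub ((hgc.tendsto a).comp ha)).sub
      (((ha.sub hx0).norm.pow 2).const_mul (1 / (4 * lam)))
    simp only [sub_self, norm_zero, ne_eq, OfNat.ofNat_ne_zero, not_false_eq_true, zero_pow,
      mul_zero, sub_zero] at h
    exact h.congr fun l => by simp only [Function.comp, frbEnergy]; ring
  have hfa : f a = ↑(A - g a) := eq_coe_of_tendsto_of_mem_prox hf hlsc hprox ha hp hfval
  refine ⟨hfa, ?_⟩
  have hfy : Tendsto (fun l => f (x (ψ l + 1))) atTop (𝓝 (f a)) := by
    rw [hfa]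
    refine (EReal.tendsto_coe.2 hfval).congr fun l => ?_
    exact EReal.coe_toReal (ne_top_of_mem_prox_s8 hf (hprox l)) (hf.1 _)
  simpa [smul_sub, hlam.ne'] using lsubd_of_tendsto_of_mem_prox hf hlam hprox ha hfy hp

open Filter Topology

noncomputable section

variable {n : ℕ}

theorem frb_subsequential_convergence_general
    (f : EuclideanSpace ℝ (Fin n) → EReal)
    (hproper : ProperFn f) (hlsc : LowerSemicontinuous f)
    (g : EuclideanSpace ℝ (Fin n) → ℝ)
    (g' : EuclideanSpace ℝ (Fin n) → EuclideanSpace ℝ (Fin n))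
    (hdiff : ∀ x, HasGradientAt g (g' x) x)
    (L : ℝ) (hL : 0 < L) (hlip : ∀ x y, ‖g' x - g' y‖ ≤ L * ‖x - y‖)
    (lam : ℝ) (hlam0 : 0 < lam) (hlam1 : lam < 1 / (4 * L))
    (hinf : ∃ b : ℝ, ∀ x, (b : EReal) ≤ f x + (g x : EReal))
    (x : ℕ → EuclideanSpace ℝ (Fin n))
    (hscheme : ∀ k : ℕ, 1 ≤ k →
      x (k + 1) ∈ Prox lam f
        (x k + lam • (g' (x (k - 1)) - g' (x k)) - lam • g' (x k)))
    (z : ℕ → WithLp 2 (EuclideanSpace ℝ (Fin n) × EuclideanSpace ℝ (Fin n)))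
    (hz : ∀ k, z k = (WithLp.equiv 2 _).symm (x (k + 1), x k))
    (Hf : WithLp 2 (EuclideanSpace ℝ (Fin n) × EuclideanSpace ℝ (Fin n)) → EReal)
    (hH : ∀ p, Hf p =
      f ((WithLp.equiv 2 _ p).1) +
        ((g ((WithLp.equiv 2 _ p).1) +
          1 / (4 * lam) * ‖(WithLp.equiv 2 _ p).1 - (WithLp.equiv 2 _ p).2‖ ^ 2 : ℝ) : EReal))
    (φ : ℕ → ℕ) (hφ : StrictMono φ)
    (xstar ystar : EuclideanSpace ℝ (Fin n))
    (hsub : Tendsto (fun l => z (φ l)) atTop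
      (nhds ((WithLp.equiv 2 _).symm (xstar, ystar)))) :
    xstar = ystar ∧
    Tendsto (fun k => Hf (z k)) atTop (nhds (f xstar + ((g xstar : ℝ) : EReal))) ∧
    (∃ s, LSubd f xstar s ∧ s + g' xstar = 0) := by
  obtain ⟨b, hb⟩ := hinf
  have hlamL : 4 * lam * L < 1 := by
    rw [lt_div_iff₀ (by positivity)] at hlam1; linarith
  obtain ⟨⟨A, hA⟩, hsteps⟩ :=
    frbEnergy_converges_and_steps_tendsto_zero hproper hdiff hL.le hlip hlam0 hlamL hb hscheme
  -- Shifting `φ` gives `1 ≤ ψ l`, so the prox step producing `x (ψ l + 1)` is available.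
  set ψ : ℕ → ℕ := fun l => φ (l + 1)
  have hψ1 : ∀ l, 1 ≤ ψ l := fun l => (Nat.le_add_left 1 l).trans hφ.le_apply
  have hψ : Tendsto ψ atTop atTop := hφ.tendsto_atTop.comp (tendsto_add_atTop_nat 1)
  have hzψ : Tendsto (fun l => (x (ψ l + 1), x (ψ l))) atTop (𝓝 (xstar, ystar)) := by
    simpa [hz, Function.comp_def, ψ] using ((WithLp.prod_continuous_ofLp 2 _ _).tendsto _).comp
      (hsub.comp (tendsto_add_atTop_nat 1))
  have hx1 : Tendsto (fun l => x (ψ l + 1)) atTop (𝓝 xstar) := hzψ.fst_nhds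
  have hx0 : Tendsto (fun l => x (ψ l)) atTop (𝓝 ystar) := hzψ.snd_nhds
  obtain rfl : xstar = ystar :=
    tendsto_nhds_unique (tendsto_comp_of_tendsto_comp_succ hsteps hψ hx1) hx0
  have hg'c : Continuous g' :=
    (lipschitzWith_iff_norm_sub_le (C := ⟨L, hL.le⟩)).2 hlip |>.continuous
  obtain ⟨hfx, hsubd⟩ := frb_limit_value_and_lsubd hproper (hlsc xstar)
    (continuous_iff_continuousAt.2 fun u => (hdiff u).continuousAt) hg'c hlam0 hscheme hA
    hsteps hψ1 hψ hx1
  refine ⟨rfl, ?_, -g' xstar, hsubd, neg_add_cancel _⟩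
  rw [hfx, ← EReal.coe_add, sub_add_cancel]
  refine (EReal.tendsto_coe.2 hA).congr' ?_
  filter_upwards [eventually_ge_atTop 1] with k hk
  rw [hH, hz, Equiv.apply_symm_apply,
    ← EReal.coe_toReal (ne_top_of_mem_prox_s8 hproper (hscheme k hk)) (hproper.1 _), ← EReal.coe_add,
    frbEnergy, add_assoc]

theorem frb_subsequential_convergence
    (f : EuclideanSpace ℝ (Fin n) → EReal)
    (hproper : ProperFn f) (hlsc : LowerSemicontinuous f)
    (lf : ℝ) (hlf : 0 < lf) (hpb : ProxBddWith f lf)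
    (g : EuclideanSpace ℝ (Fin n) → ℝ)
    (g' : EuclideanSpace ℝ (Fin n) → EuclideanSpace ℝ (Fin n))
    (hdiff : ∀ x, HasGradientAt g (g' x) x)
    (L : ℝ) (hL : 0 < L) (hlip : ∀ x y, ‖g' x - g' y‖ ≤ L * ‖x - y‖)
    (lam : ℝ) (hlam0 : 0 < lam) (hlam1 : lam < 1 / (4 * L)) (hlam2 : lam < lf)
    (hinf : ∃ b : ℝ, ∀ x, (b : EReal) ≤ f x + (g x : EReal))
    (x : ℕ → EuclideanSpace ℝ (Fin n))
    (hscheme : ∀ k : ℕ, 1 ≤ k →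
      x (k + 1) ∈ Prox lam f
        (x k + lam • (g' (x (k - 1)) - g' (x k)) - lam • g' (x k)))
    (z : ℕ → WithLp 2 (EuclideanSpace ℝ (Fin n) × EuclideanSpace ℝ (Fin n)))
    (hz : ∀ k, z k = (WithLp.equiv 2 _).symm (x (k + 1), x k))
    (Hf : WithLp 2 (EuclideanSpace ℝ (Fin n) × EuclideanSpace ℝ (Fin n)) → EReal)
    (hH : ∀ p, Hf p =
      f ((WithLp.equiv 2 _ p).1) +
        ((g ((WithLp.equiv 2 _ p).1) +
          1 / (4 * lam) * ‖(WithLp.equiv 2 _ p).1 - (WithLp.equiv 2 _ p).2‖ ^ 2 : ℝ) : EReal))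
    (hbdd : Bornology.IsBounded (Set.range z))
    (φ : ℕ → ℕ) (hφ : StrictMono φ)
    (xstar ystar : EuclideanSpace ℝ (Fin n))
    (hsub : Tendsto (fun l => z (φ l)) atTop
      (nhds ((WithLp.equiv 2 _).symm (xstar, ystar)))) :
    xstar = ystar ∧
    Tendsto (fun k => Hf (z k)) atTop (nhds (f xstar + ((g xstar : ℝ) : EReal))) ∧
    (∃ s, LSubd f xstar s ∧ s + g' xstar = 0) :=
  frb_subsequential_convergence_general f hproper hlsc g g' hdiff L hL hlip lam hlam0 hlam1 hinf x
    hscheme z hz Hf hH φ hφ xstar ystar hsub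
end
end
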